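/- Every connected induced subgraph of a line graph that is an odd cactus is either an odd cycle or the line graph of a tree. -/

import Mathlib

/-- `B` induces a biconnected subgraph of `G`. -/
def IsBiconnectedSet {V : Type} (G : SimpleGraph V) (B : Set V) : Prop :=
  2 ≤ B.ncard ∧ (G.induce B).Connected ∧ ∀ v ∈ B, (G.induce (B \ {v})).Preconnected

/-- A block of `G`: a maximal biconnected subgraph. -/
def IsBlock {V : Type} (G : SimpleGraph V) (B : Set V) : Prop :=
  IsBiconnectedSet G B ∧ ∀ B', IsBiconnectedSet G B' → B ⊆ B' → B = B'

/-- An odd cactus: every block is an edge or an odd cycle. -/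
def IsOddCactus {V : Type} (G : SimpleGraph V) : Prop :=
  ∀ B : Set V, IsBlock G B →
    Nonempty ((G.induce B) ≃g (⊤ : SimpleGraph (Fin 2))) ∨
      ∃ k : ℕ, 1 ≤ k ∧ Nonempty ((G.induce B) ≃g SimpleGraph.cycleGraph (2 * k + 1))

/-!
Let `F` be the graph on `V` whose edge set is `D`, so that the graph in question is `L(F)`.
If `F` is acyclic, then `F` restricted to its non-isolated vertices is a tree `T` with
`L(T) ≅ L(F)`, and `T` is connected because `L(F)` is. Otherwise the edges of a cycle of `F` form
a biconnected set `S` of at least three vertices of `L(F)`, so the block containing `S` is an odd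
cycle rather than an edge. Every vertex of a biconnected set of at least three vertices has two
neighbours inside the set; inside a cycle this makes the set closed under successors, so `S` is
the whole block. An edge of `F` outside `S` that meets `S` shares a vertex with two edges of the
cycle, so it could be added to `S` keeping it biconnected. By maximality of the block there is no
such edge, hence by connectivity `S` is all of `L(F)`, which is therefore an odd cycle.
-/

open SimpleGraph

section Blocks

variable {α β : Type} {A : SimpleGraph α} {A' : SimpleGraph β} {S : Set α}

lemma SimpleGraph.connected_induce_insert {a b : α} (hS : (A.induce S).Preconnected)
    (ha : a ∈ S) (hab : A.Adj a b) : (A.induce (insert b S)).Connected := by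
  rw [← Set.union_singleton]
  exact connected_induce_union hS .of_subsingleton ha rfl hab

lemma SimpleGraph.exists_adj_of_preconnected_induce (hS : (A.induce S).Preconnected)
    {v w : α} (hv : v ∈ S) (hw : w ∈ S) (hvw : v ≠ w) : ∃ u ∈ S, A.Adj v u := by
  obtain ⟨⟨u, hu⟩, hvu⟩ := (mem_support _).mp <|
    mem_support_of_reachable (Subtype.coe_ne_coe.mp hvw) (hS ⟨v, hv⟩ ⟨w, hw⟩)
  exact ⟨u, hu, hvu⟩

lemma IsBiconnectedSet.finite (hS : IsBiconnectedSet A S) : S.Finite :=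
  Set.finite_of_ncard_ne_zero (by have := hS.1; omega)

lemma IsBiconnectedSet.nontrivial_neighborSet_inter (hS : IsBiconnectedSet A S)
    (h3 : 3 ≤ S.ncard) {v : α} (hv : v ∈ S) : (A.neighborSet v ∩ S).Nontrivial := by
  obtain ⟨w, hw, hwv⟩ := Set.exists_ne_of_one_lt_ncard (by omega : 1 < S.ncard) v
  obtain ⟨u, hu, hvu⟩ := exists_adj_of_preconnected_induce hS.2.1.preconnected hv hw hwv.symm
  have h2 : 1 < (S \ {u}).ncard := by
    rw [Set.ncard_sdiff_singleton_of_mem hu]; omega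
  obtain ⟨w', hw', hw'v⟩ := Set.exists_ne_of_one_lt_ncard h2 v
  obtain ⟨u', ⟨hu', hu'u⟩, hvu'⟩ := exists_adj_of_preconnected_induce (hS.2.2 u hu)
    ⟨hv, hvu.ne⟩ hw' hw'v.symm
  exact ⟨u, ⟨hvu, hu⟩, u', ⟨hvu', hu'⟩, Ne.symm hu'u⟩

lemma IsBiconnectedSet.insert (hS : IsBiconnectedSet A S) {f : α} (hf : f ∉ S)
    (hfS : (A.neighborSet f ∩ S).Nontrivial) : IsBiconnectedSet A (insert f S) := by
  obtain ⟨g, hfg, hg⟩ := hfS.nonempty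
  refine ⟨?_, connected_induce_insert hS.2.1.preconnected hg hfg.symm, fun z hz ↦ ?_⟩
  · rw [Set.ncard_insert_of_notMem hf hS.finite]; have := hS.1; omega
  obtain rfl | hzS := hz
  · rw [Set.insert_sdiff_self_of_notMem hf]
    exact hS.2.1.preconnected
  · obtain ⟨g', ⟨hfg', hg'⟩, hg'z⟩ := hfS.exists_ne z
    rw [← Set.insert_sdiff_singleton_comm (ne_of_mem_of_not_mem hzS hf).symm]
    exact (connected_induce_insert (hS.2.2 z hzS) ⟨hg', hg'z⟩ hfg'.symm).preconnected

lemma IsBiconnectedSet.exists_isBlock_superset [Finite α] (hS : IsBiconnectedSet A S) :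
    ∃ B, IsBlock A B ∧ S ⊆ B := by
  obtain ⟨B, hSB, hB⟩ := Finite.exists_le_maximal (p := IsBiconnectedSet A) hS
  exact ⟨B, ⟨hB.1, fun B' hB' hBB' ↦ hBB'.antisymm (hB.2 hB' hBB')⟩, hSB⟩

open Fin.NatCast in
lemma SimpleGraph.eq_univ_of_nontrivial_cycleGraph_neighborSet_inter {m : ℕ} {T : Set (Fin m)}
    (hT : T.Nonempty) (h : ∀ i ∈ T, ((cycleGraph m).neighborSet i ∩ T).Nontrivial) :
    T = Set.univ := by
  obtain ⟨i, hi⟩ := hT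
  rcases m with _ | _ | n
  · exact i.elim0
  · obtain ⟨a, -, b, -, hab⟩ := h i hi
    exact (hab (Subsingleton.elim (α := Fin 1) a b)).elim
  have hsucc : ∀ j ∈ T, j + 1 ∈ T := by
    intro j hj
    obtain ⟨a, ⟨ha, haT⟩, b, ⟨hb, hbT⟩, hab⟩ := h j hj
    rw [cycleGraph_neighborSet] at ha hb
    rcases ha with rfl | rfl
    · rcases hb with rfl | rfl
      · exact absurd rfl hab
      · exact hbT
    · exact haT
  have hadd : ∀ k : ℕ, i + (k : Fin (n + 2)) ∈ T := by
    intro k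
    induction k with
    | zero => simpa using hi
    | succ k ih => simpa [add_assoc] using hsucc _ ih
  refine Set.eq_univ_of_forall fun j ↦ ?_
  simpa using hadd (j - i).val

lemma IsBiconnectedSet.eq_of_subset_of_iso_cycleGraph {B : Set α} {m : ℕ}
    (hS : IsBiconnectedSet A S) (h3 : 3 ≤ S.ncard) (hSB : S ⊆ B)
    (ψ : A.induce B ≃g cycleGraph m) : S = B := by
  set T : Set (Fin m) := {i | (ψ.symm i : α) ∈ S}
  have hT : T = Set.univ := by
    refine eq_univ_of_nontrivial_cycleGraph_neighborSet_inter ?_ fun i hi ↦ ?_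
    · obtain ⟨v, hv⟩ := hS.2.1.nonempty
      exact ⟨ψ ⟨v, hSB hv⟩, by simpa [T] using hv⟩
    · obtain ⟨u, ⟨hu, huS⟩, w, ⟨hw, hwS⟩, huw⟩ := hS.nontrivial_neighborSet_inter h3 hi
      refine ⟨ψ ⟨u, hSB huS⟩, ⟨?_, by simpa [T]⟩, ψ ⟨w, hSB hwS⟩,
        ⟨?_, by simpa [T]⟩, by simpa using huw⟩
      · rw [mem_neighborSet, ← ψ.symm.map_adj_iff]
        simpa using hu
      · rw [mem_neighborSet, ← ψ.symm.map_adj_iff]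
        simpa using hw
  refine hSB.antisymm fun b hb ↦ ?_
  have : ψ ⟨b, hb⟩ ∈ T := hT ▸ Set.mem_univ _
  simpa [T] using this

lemma IsBiconnectedSet.isBlock_and_nonempty_iso_cycleGraph [Finite α] (hA : IsOddCactus A)
    (hS : IsBiconnectedSet A S) (h3 : 3 ≤ S.ncard) :
    IsBlock A S ∧ ∃ k, 1 ≤ k ∧ Nonempty (A.induce S ≃g cycleGraph (2 * k + 1)) := by
  obtain ⟨B, hB, hSB⟩ := hS.exists_isBlock_superset
  rcases hA B hB with ⟨⟨φ⟩⟩ | ⟨k, hk, ⟨φ⟩⟩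
  · have hB2 : B.ncard = 2 := by
      rw [← Nat.card_coe_set_eq, Nat.card_congr φ.toEquiv, Nat.card_eq_fintype_card,
        Fintype.card_fin]
    have := Set.ncard_le_ncard hSB (Set.toFinite B)
    omega
  · obtain rfl := hS.eq_of_subset_of_iso_cycleGraph h3 hSB φ
    exact ⟨hB, k, hk, ⟨φ⟩⟩

theorem IsOddCactus.nonempty_iso_cycleGraph [Finite α] (hA : IsOddCactus A)
    (hconn : A.Connected) (hS : IsBiconnectedSet A S) (h3 : 3 ≤ S.ncard)
    (hclosed : ∀ f ∉ S, ∀ g ∈ S, A.Adj f g → (A.neighborSet f ∩ S).Nontrivial) :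
    ∃ k, 1 ≤ k ∧ Nonempty (A ≃g cycleGraph (2 * k + 1)) := by
  obtain ⟨hblock, k, hk, ⟨φ⟩⟩ := hS.isBlock_and_nonempty_iso_cycleGraph hA h3
  obtain rfl : S = Set.univ := by
    by_contra hne
    obtain ⟨f, hf⟩ := (Set.ne_univ_iff_exists_notMem S).mp hne
    obtain ⟨⟨g, hg⟩⟩ := hS.2.1.nonempty
    obtain ⟨d, -, hdS, hdf⟩ := (hconn g f).some.exists_boundary_dart S hg hf
    have hins := hS.insert hdf (hclosed _ hdf _ hdS d.adj.symm)
    exact hdf (hblock.2 _ hins (Set.subset_insert _ _) ▸ Set.mem_insert _ _)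
  exact ⟨k, hk, ⟨A.induceUnivIso.symm.trans φ⟩⟩

def SimpleGraph.Iso.induceImage (φ : A ≃g A') (S : Set α) :
    A.induce S ≃g A'.induce (φ '' S) :=
  φ.induce φ.injective.injOn.bijOn_image

lemma IsBiconnectedSet.image_iso (φ : A ≃g A') (hS : IsBiconnectedSet A S) :
    IsBiconnectedSet A' (φ '' S) := by
  refine ⟨?_, (φ.induceImage S).connected_iff.mp hS.2.1, ?_⟩
  · rw [Set.ncard_image_of_injective _ φ.injective]
    exact hS.1
  · rintro _ ⟨v, hv, rfl⟩
    rw [← Set.image_singleton, ← Set.image_sdiff φ.injective]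
    exact (hS.2.2 v hv).map (φ.induceImage _).toHom (φ.induceImage _).surjective

lemma IsBlock.image_iso {B : Set α} (φ : A ≃g A') (hB : IsBlock A B) :
    IsBlock A' (φ '' B) := by
  refine ⟨hB.1.image_iso φ, fun B' hB' hBB' ↦ ?_⟩
  have hBB'' : B ⊆ φ.symm '' B' :=
    fun b hb ↦ ⟨φ b, hBB' ⟨b, hb, rfl⟩, φ.symm_apply_apply b⟩
  rw [hB.2 _ (hB'.image_iso φ.symm) hBB'', Set.image_image]
  simp

lemma IsOddCactus.of_iso (φ : A ≃g A') (h : IsOddCactus A') : IsOddCactus A := by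
  intro B hB
  rcases h _ (hB.image_iso φ) with ⟨⟨χ⟩⟩ | ⟨k, hk, ⟨χ⟩⟩
  · exact .inl ⟨(φ.induceImage B).trans χ⟩
  · exact .inr ⟨k, hk, ⟨(φ.induceImage B).trans χ⟩⟩

end Blocks

namespace SimpleGraph

variable {V : Type} {F : SimpleGraph V}

namespace Walk

variable {u : V} {c : F.Walk u u}

lemma IsCycle.mem_edges_tail_iff (hc : c.IsCycle) {e : Sym2 V} :
    e ∈ c.tail.edges ↔ e ∈ c.edges ∧ e ≠ s(u, c.snd) := by
  classical
  have hedges : c.edges = s(u, c.snd) :: c.tail.edges := by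
    conv_lhs => rw [← c.cons_tail_eq hc.not_nil]
    rw [edges_cons]
  rw [and_comm, ← hc.edges_nodup.mem_erase_iff, hedges, List.erase_cons_head]

lemma IsCycle.eq_snd_or_eq_penultimate (hc : c.IsCycle) {y : V} (h : s(u, y) ∈ c.edges) :
    y = c.snd ∨ y = c.penultimate := by
  by_cases hy : s(u, y) = s(u, c.snd)
  · exact .inl (Sym2.congr_right.mp hy)
  right
  have htail : ¬c.tail.Nil := fun hnil ↦ (c.adj_snd hc.not_nil).ne hnil.eq.symm
  rw [hc.isPath_tail.eq_penultimate_of_mem_edges (hc.mem_edges_tail_iff.mpr ⟨h, hy⟩)]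
  conv_rhs => rw [← c.cons_tail_eq hc.not_nil]
  rw [penultimate_cons_of_not_nil _ _ htail]

lemma IsCycle.exists_walk_edges_eq_erase {v : V} {c : F.Walk v v} (hc : c.IsCycle)
    {z : Sym2 V} (hz : z ∈ c.edges) :
    ∃ (a b : V) (q : F.Walk a b), ∀ e, e ∈ q.edges ↔ e ∈ c.edges ∧ e ≠ z := by
  classical
  induction z using Sym2.ind with | _ x y =>
  have hx : x ∈ c.support := c.fst_mem_support_of_mem_edges hz
  have hmem : ∀ e, e ∈ (c.rotate x hx).edges ↔ e ∈ c.edges :=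
    fun e ↦ (c.rotate_edges x hx).mem_iff
  have hc' := hc.rotate hx
  -- Once the cycle starts at `x`, the edge `s(x, y)` is its first or its last edge.
  rcases hc'.eq_snd_or_eq_penultimate ((hmem _).mpr hz) with rfl | rfl
  · exact ⟨_, _, (c.rotate x hx).tail, fun e ↦ by rw [hc'.mem_edges_tail_iff, hmem]⟩
  · refine ⟨_, _, (c.rotate x hx).reverse.tail, fun e ↦ ?_⟩
    rw [hc'.reverse.mem_edges_tail_iff, edges_reverse, List.mem_reverse, hmem, snd_reverse]

lemma IsCycle.nontrivial_edges_mem {v w : V} {c : F.Walk v v} (hc : c.IsCycle)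
    (hw : w ∈ c.support) : {e | e ∈ c.edges ∧ w ∈ e}.Nontrivial := by
  classical
  have hmem : ∀ e, e ∈ (c.rotate w hw).edges ↔ e ∈ c.edges :=
    fun e ↦ (c.rotate_edges w hw).mem_iff
  have hc' := hc.rotate hw
  refine ⟨s(w, (c.rotate w hw).snd), ⟨(hmem _).mp (mk_start_snd_mem_edges hc'.not_nil),
    Sym2.mem_mk_left _ _⟩, s((c.rotate w hw).penultimate, w),
    ⟨(hmem _).mp (mk_penultimate_end_mem_edges hc'.not_nil), Sym2.mem_mk_right _ _⟩, ?_⟩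
  rw [Ne, Sym2.eq_swap, Sym2.congr_left]
  exact hc'.snd_ne_penultimate

end Walk

lemma reachable_of_mem_edgeSet {e : Sym2 V} (he : e ∈ F.edgeSet) {x y : V} (hx : x ∈ e)
    (hy : y ∈ e) : F.Reachable x y := by
  by_cases hxy : x = y
  · exact hxy ▸ .rfl
  · have hxy' : s(x, y) ∈ F.edgeSet := (Sym2.mem_and_mem_iff hxy).mp ⟨hx, hy⟩ ▸ he
    exact hxy'.reachable

lemma reachable_of_lineGraph_walk {e e' : F.edgeSet} (p : F.lineGraph.Walk e e') {x y : V}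
    (hx : x ∈ (e : Sym2 V)) (hy : y ∈ (e' : Sym2 V)) : F.Reachable x y := by
  induction p generalizing x with
  | nil => exact reachable_of_mem_edgeSet (Subtype.prop _) hx hy
  | cons h q ih =>
    obtain ⟨-, z, hz, hz'⟩ := lineGraph_adj_iff_exists.mp h
    exact (reachable_of_mem_edgeSet (Subtype.prop _) hx hz).trans (ih hz' hy)

lemma Connected.of_lineGraph (hL : F.lineGraph.Connected) (hF : ∀ v, ∃ w, F.Adj v w) :
    F.Connected := by
  obtain ⟨⟨e, he⟩⟩ := hL.nonempty
  induction e using Sym2.ind with | _ a b =>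
  rw [connected_iff]
  refine ⟨fun v w ↦ ?_, ⟨a⟩⟩
  obtain ⟨v', hv⟩ := hF v
  obtain ⟨w', hw⟩ := hF w
  exact reachable_of_lineGraph_walk (hL ⟨s(v, v'), hv⟩ ⟨s(w, w'), hw⟩).some
    (Sym2.mem_mk_left _ _) (Sym2.mem_mk_left _ _)

noncomputable def lineGraphInduceSupportIso (F : SimpleGraph V) :
    (F.induce F.support).lineGraph ≃g F.lineGraph :=
  RelIso.ofSurjective (Copy.induce F F.support).toLineGraphEmbedding <| by
    rintro ⟨e, he⟩
    induction e using Sym2.ind with | _ a b =>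
    exact ⟨⟨s(⟨a, he.mem_support_left⟩, ⟨b, he.mem_support_right⟩), he⟩, rfl⟩

lemma IsAcyclic.isTree_induce_support (hF : F.IsAcyclic) (hL : F.lineGraph.Connected) :
    (F.induce F.support).IsTree := by
  refine ⟨.of_lineGraph (F.lineGraphInduceSupportIso.connected_iff.mpr hL) ?_, hF.induce _⟩
  rintro ⟨v, w, hvw⟩
  exact ⟨⟨w, hvw.mem_support_right⟩, hvw⟩

def Walk.lineVerts {u v : V} (p : F.Walk u v) : Set F.edgeSet := {e | (e : Sym2 V) ∈ p.edges}

lemma reachable_induce_lineGraph_of_mem {s : Set F.edgeSet} {e e' : F.edgeSet} (he : e ∈ s)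
    (he' : e' ∈ s) {z : V} (hz : z ∈ (e : Sym2 V)) (hz' : z ∈ (e' : Sym2 V)) :
    (F.lineGraph.induce s).Reachable ⟨e, he⟩ ⟨e', he'⟩ := by
  by_cases hee' : e = e'
  · subst hee'
    rfl
  · exact Adj.reachable (lineGraph_adj_iff_exists.mpr ⟨hee', z, hz, hz'⟩)

lemma Walk.preconnected_induce_lineVerts {u v : V} (p : F.Walk u v) :
    (F.lineGraph.induce p.lineVerts).Preconnected := by
  induction p with
  | nil => exact fun ⟨_, he⟩ ↦ by simp [lineVerts] at he
  | @cons u w _ h q ih =>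
    have he₀ : ⟨s(u, w), h⟩ ∈ (cons h q).lineVerts := by simp [lineVerts]
    have hsub : q.lineVerts ⊆ (cons h q).lineVerts := fun e he ↦ by simp_all [lineVerts]
    suffices key : ∀ e (he : e ∈ (cons h q).lineVerts),
        (F.lineGraph.induce (cons h q).lineVerts).Reachable ⟨e, he⟩ ⟨_, he₀⟩ from
      fun e e' ↦ (key _ e.2).trans (key _ e'.2).symm
    intro e he
    rcases List.mem_cons.mp he with he | he
    · exact reachable_induce_lineGraph_of_mem _ _ (he ▸ Sym2.mem_mk_left u w)
        (Sym2.mem_mk_left u w)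
    · have hq : ¬q.Nil := edges_eq_nil.not.mp (List.ne_nil_of_mem he)
      obtain ⟨e', he', hwe'⟩ :=
        (mem_support_iff_exists_mem_edges_of_not_nil hq).mp q.start_mem_support
      have hq' : ⟨e', q.edges_subset_edgeSet he'⟩ ∈ q.lineVerts := he'
      exact ((ih ⟨e, he⟩ ⟨_, hq'⟩).map (induceHomOfLE _ hsub).toHom).trans
        (reachable_induce_lineGraph_of_mem _ _ hwe' (Sym2.mem_mk_right u w))

lemma Walk.IsTrail.ncard_lineVerts {u v : V} {p : F.Walk u v} (hp : p.IsTrail) :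
    p.lineVerts.ncard = p.length := by
  classical
  have : p.lineVerts = Subtype.val ⁻¹' (p.edges.toFinset : Set (Sym2 V)) := by
    ext; simp [lineVerts]
  rw [this, Set.ncard_preimage_of_injective_subset_range Subtype.val_injective
    (fun e he ↦ ⟨⟨e, p.edges_subset_edgeSet (by simpa using he)⟩, rfl⟩),
    Set.ncard_coe_finset, List.toFinset_card_of_nodup hp.edges_nodup, length_edges]

lemma Walk.IsCycle.isBiconnectedSet_lineVerts {v : V} {c : F.Walk v v} (hc : c.IsCycle) :
    IsBiconnectedSet F.lineGraph c.lineVerts := by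
  have h3 : 3 ≤ c.lineVerts.ncard := hc.isTrail.ncard_lineVerts ▸ hc.three_le_length
  refine ⟨by omega, ?_, fun z hz ↦ ?_⟩
  · rw [connected_iff]
    exact ⟨c.preconnected_induce_lineVerts,
      (Set.nonempty_of_ncard_ne_zero (by omega)).to_subtype⟩
  · obtain ⟨a, b, q, hq⟩ := hc.exists_walk_edges_eq_erase hz
    have : c.lineVerts \ {z} = q.lineVerts := by
      ext e
      simp [lineVerts, hq, Subtype.ext_iff]
    exact this ▸ q.preconnected_induce_lineVerts

lemma Walk.IsCycle.nontrivial_neighborSet_inter_lineVerts {v : V} {c : F.Walk v v}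
    (hc : c.IsCycle) {f g : F.edgeSet} (hf : f ∉ c.lineVerts) (hg : g ∈ c.lineVerts)
    (hfg : F.lineGraph.Adj f g) : (F.lineGraph.neighborSet f ∩ c.lineVerts).Nontrivial := by
  obtain ⟨-, w, hwf, hwg⟩ := lineGraph_adj_iff_exists.mp hfg
  obtain ⟨e₁, ⟨he₁, hw₁⟩, e₂, ⟨he₂, hw₂⟩, he₁₂⟩ :=
    hc.nontrivial_edges_mem (c.mem_support_of_mem_edges hg hwg)
  have hadj : ∀ e (he : e ∈ c.edges), w ∈ e →
      ⟨e, c.edges_subset_edgeSet he⟩ ∈ F.lineGraph.neighborSet f ∩ c.lineVerts :=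
    fun e he hw ↦ ⟨lineGraph_adj_iff_exists.mpr ⟨fun h ↦ hf (h ▸ he), w, hwf, hw⟩, he⟩
  exact ⟨_, hadj e₁ he₁ hw₁, _, hadj e₂ he₂ hw₂,
    fun h ↦ he₁₂ (congrArg Subtype.val h)⟩

theorem lineGraph_cycle_or_lineGraph_of_tree [Finite V] (hconn : F.lineGraph.Connected)
    (hcactus : IsOddCactus F.lineGraph) :
    (∃ k : ℕ, 1 ≤ k ∧ Nonempty (F.lineGraph ≃g cycleGraph (2 * k + 1))) ∨
      ∃ (W : Type) (T : SimpleGraph W), T.IsTree ∧ Nonempty (F.lineGraph ≃g T.lineGraph) := by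
  by_cases hF : F.IsAcyclic
  · exact .inr ⟨_, _, hF.isTree_induce_support hconn, ⟨F.lineGraphInduceSupportIso.symm⟩⟩
  obtain ⟨v, c, hc⟩ : ∃ v, ∃ c : F.Walk v v, c.IsCycle := by simpa [IsAcyclic] using hF
  exact .inl <| hcactus.nonempty_iso_cycleGraph hconn hc.isBiconnectedSet_lineVerts
    (hc.isTrail.ncard_lineVerts ▸ hc.three_le_length)
    fun _ hf _ hg hfg ↦ hc.nontrivial_neighborSet_inter_lineVerts hf hg hfg

lemma fromEdgeSet_image_val_le (G : SimpleGraph V) (D : Set G.edgeSet) :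
    fromEdgeSet (Subtype.val '' D) ≤ G := by
  rw [SimpleGraph.fromEdgeSet_le]
  rintro _ ⟨⟨d, -, rfl⟩, -⟩
  exact d.2

lemma range_toLineGraphEmbedding_ofLE (G : SimpleGraph V) (D : Set G.edgeSet) :
    Set.range (Copy.ofLE _ _ (fromEdgeSet_image_val_le G D)).toLineGraphEmbedding = D := by
  ext d
  constructor
  · rintro ⟨⟨e, he⟩, rfl⟩
    obtain ⟨⟨d, hd, rfl⟩, -⟩ := edgeSet_fromEdgeSet _ ▸ he
    simpa [Copy.toLineGraphEmbedding] using hd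
  · intro hd
    refine ⟨⟨d, ?_⟩, by simp [Copy.toLineGraphEmbedding]⟩
    rw [edgeSet_fromEdgeSet]
    exact ⟨⟨d, hd, rfl⟩, G.not_isDiag_of_mem_edgeSet d.2⟩

noncomputable def induceLineGraphIso (G : SimpleGraph V) (D : Set G.edgeSet) :
    G.lineGraph.induce D ≃g (fromEdgeSet (Subtype.val '' D)).lineGraph :=
  (Iso.refl.induce (by rw [range_toLineGraphEmbedding_ofLE]; exact Set.bijOn_id D)).trans
    (Copy.ofLE _ _ (fromEdgeSet_image_val_le G D)).toLineGraphEmbedding.isoInduceRange.symm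

end SimpleGraph

/-- Every connected induced subgraph of a line graph that is an odd cactus is
either an odd cycle or the line graph of a tree. -/
theorem oddCactus_in_lineGraph_cycle_or_lineGraph_of_tree {V : Type} [Fintype V]
    (G : SimpleGraph V) (D : Set G.edgeSet)
    (hconn : ((G.lineGraph).induce D).Connected)
    (hcactus : IsOddCactus ((G.lineGraph).induce D)) :
    (∃ k : ℕ, 1 ≤ k ∧
        Nonempty (((G.lineGraph).induce D) ≃g SimpleGraph.cycleGraph (2 * k + 1))) ∨
      ∃ (W : Type) (T : SimpleGraph W), T.IsTree ∧
        Nonempty (((G.lineGraph).induce D) ≃g T.lineGraph) := by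
  let φ := induceLineGraphIso G D
  rcases lineGraph_cycle_or_lineGraph_of_tree (φ.connected_iff.mp hconn) (hcactus.of_iso φ.symm)
    with ⟨k, hk, ⟨ψ⟩⟩ | ⟨W, T, hT, ⟨ψ⟩⟩
  · exact .inl ⟨k, hk, ⟨φ.trans ψ⟩⟩
  · exact .inr ⟨W, T, hT, ⟨φ.trans ψ⟩⟩
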